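/- arXiv:2412.09570 — 2 statements merged into one kernel-verified Lean document; each statement's English description precedes it below -/
import Mathlib

section
/- Let G = T^∞F be the infinite tree extension of a finite graph F of maximum degree at most d, and suppose G has an ℓ²-eigenvalue λ = (ζ + 1/ζ)√(d−1) for some ζ > 1, with normalized eigenvector ψ. Then for all ℓ ≥ 0, the mass of ψ on the vertices at distance exactly ℓ from F satisfies Σ_{u ∈ V_ℓ} |ψ(u)|² ≤ ζ^{−2ℓ+2}. -/
noncomputable section

/-- Vertices of the infinite tree extension `T^∞ F`. -/
abbrev TInfVert (d : ℕ) (V₀ : Type) [Fintype V₀] (F : SimpleGraph V₀)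
    [DecidableRel F.Adj] : Type :=
  V₀ ⊕ ((Σ v : V₀, Fin (d - F.degree v)) × List (Fin (d - 1)))

/-- The infinite tree extension `T^∞ F`. -/
def TInf (d : ℕ) (V₀ : Type) [Fintype V₀] (F : SimpleGraph V₀) [DecidableRel F.Adj] :
    SimpleGraph (TInfVert d V₀ F) where
  Adj x y :=
    match x, y with
    | Sum.inl u, Sum.inl v => F.Adj u v
    | Sum.inl u, Sum.inr (t, l) => t.1 = u ∧ l = []
    | Sum.inr (t, l), Sum.inl u => t.1 = u ∧ l = []
    | Sum.inr (t, l), Sum.inr (s, m) => t = s ∧ ∃ a, m = l ++ [a] ∨ l = m ++ [a]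
  symm := by
    constructor
    rintro (u | ⟨t, l⟩) (v | ⟨s, m⟩) h
    · exact F.adj_symm h
    · exact h
    · exact h
    · exact ⟨h.1.symm, h.2.imp fun a ha => ha.symm⟩
  loopless := by
    constructor
    rintro (u | ⟨t, l⟩) h
    · exact F.loopless.irrefl u h
    · obtain ⟨a, ha | ha⟩ := h.2 <;> simpa using congrArg List.length ha

/-- Distance of a vertex of `T^∞ F` from the set `V₀` of original vertices. -/
def TIlevel (d : ℕ) (V₀ : Type) [Fintype V₀] (F : SimpleGraph V₀) [DecidableRel F.Adj] :
    TInfVert d V₀ F → ℕ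
  | Sum.inl _ => 0
  | Sum.inr (_, l) => l.length + 1

/-!
Write `s n` for the mass of `ψ` on `V_(n+1)` and `p n` for `∑ ψ u * ψ (parent u)` over
`u ∈ V_(n+1)`. Multiplying the eigenvalue equation at each `u ∈ V_(n+1)` by `ψ u` and summing gives
`λ s n = p n + p (n + 1)`, and Cauchy–Schwarz gives `p (n + 1) ≤ √(d - 1) √(s n) √(s (n + 1))`.
Hence `x n = √(s n)` satisfies `(ζ + 1/ζ) x (n + 1) ≤ x n + x (n + 2)`, i.e. `y n = x (n + 1) - x n / ζ`
satisfies `ζ y n ≤ y (n + 1)`. As `x` is bounded by `‖ψ‖ = 1`, `y` is never positive, so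
`x (n + 1) ≤ x n / ζ` and `s n ≤ ζ ^ (-2 n)`.
-/

theorem List.Vector.sum_succ_eq_sum_sum_append {α M : Type*} [Fintype α] [AddCommMonoid M]
    (g : List α → M) (n : ℕ) :
    ∑ m : List.Vector α (n + 1), g m.1 = ∑ l : List.Vector α n, ∑ a : α, g (l.1 ++ [a]) := by
  let f : List.Vector α n × α → List.Vector α (n + 1) :=
    fun p => ⟨p.1.1 ++ [p.2], by simp [p.1.2]⟩
  have hf : Function.Bijective f := by
    constructor
    · rintro ⟨⟨l, hl⟩, a⟩ ⟨⟨m, hm⟩, b⟩ h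
      obtain ⟨rfl, hab⟩ := List.append_inj' (congrArg Subtype.val h) (by simp)
      obtain rfl : a = b := by simpa using hab
      rfl
    · rintro ⟨m, hm⟩
      obtain ⟨l, a, rfl⟩ := List.eq_nil_or_concat m |>.resolve_left (by rintro rfl; simp at hm)
      exact ⟨(⟨l, by simpa using hm⟩, a), Subtype.ext (List.concat_eq_append ..).symm⟩
  rw [← (Equiv.ofBijective f hf).sum_comp (fun m => g m.1), Fintype.sum_prod_type]
  rfl

theorem mul_succ_le_of_bddAbove_of_le_add {ζ : ℝ} (hζ : 1 < ζ) {x : ℕ → ℝ} (hx : ∀ n, 0 ≤ x n)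
    (hbdd : BddAbove (Set.range x)) (hrec : ∀ n, (ζ + 1 / ζ) * x (n + 1) ≤ x n + x (n + 2))
    (n : ℕ) : ζ * x (n + 1) ≤ x n := by
  have hζ0 : 0 < ζ := zero_lt_one.trans hζ
  by_contra! h
  set y : ℕ → ℝ := fun k => x (n + k + 1) - x (n + k) / ζ
  have hy0 : 0 < y 0 := by
    simp only [y, add_zero, sub_pos, div_lt_iff₀ hζ0]
    linarith
  have hgrow : ∀ k, ζ * y k ≤ y (k + 1) := by
    intro k
    have := hrec (n + k)
    simp only [y, ← add_assoc, mul_sub, mul_div_cancel₀ _ hζ0.ne']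
    rw [add_mul, one_div_mul_eq_div] at this
    linarith
  obtain ⟨C, hC⟩ := hbdd
  obtain ⟨k, hk⟩ := ((tendsto_atTop_of_geom_le hy0 hζ hgrow).eventually_gt_atTop C).exists
  have hyk : y k ≤ C :=
    (sub_le_self _ (div_nonneg (hx _) hζ0.le)).trans (hC (Set.mem_range_self _))
  linarith

theorem le_inv_pow_mul_of_bddAbove_of_le_add {ζ : ℝ} (hζ : 1 < ζ) {x : ℕ → ℝ}
    (hx : ∀ n, 0 ≤ x n) (hbdd : BddAbove (Set.range x))
    (hrec : ∀ n, (ζ + 1 / ζ) * x (n + 1) ≤ x n + x (n + 2)) (n : ℕ) :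
    x n ≤ ζ⁻¹ ^ n * x 0 := by
  have hζ0 : 0 < ζ := zero_lt_one.trans hζ
  refine le_geom (inv_nonneg.mpr hζ0.le) n fun k _ => ?_
  rw [inv_mul_eq_div, le_div_iff₀ hζ0, mul_comm]
  exact mul_succ_le_of_bddAbove_of_le_add hζ hx hbdd hrec k

namespace TInf

variable {d : ℕ} {V₀ : Type} [Fintype V₀] {F : SimpleGraph V₀} [DecidableRel F.Adj]
  (ψ : TInfVert d V₀ F → ℝ) (t : Σ v : V₀, Fin (d - F.degree v)) (l : List (Fin (d - 1)))

def parent : TInfVert d V₀ F :=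
  if l = [] then Sum.inl t.1 else Sum.inr (t, l.dropLast)

@[simp]
theorem parent_append_singleton (a : Fin (d - 1)) : parent t (l ++ [a]) = Sum.inr (t, l) := by
  simp [parent]

theorem adj_parent : (TInf d V₀ F).Adj (Sum.inr (t, l)) (parent t l) := by
  rcases eq_or_ne l [] with rfl | hl
  · exact ⟨rfl, rfl⟩
  · simp only [parent, if_neg hl]
    exact ⟨rfl, l.getLast hl, Or.inr (List.dropLast_append_getLast hl).symm⟩

theorem parent_ne_child (a : Fin (d - 1)) : parent t l ≠ Sum.inr (t, l ++ [a]) := by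
  rcases eq_or_ne l [] with rfl | hl
  · simp [parent]
  · simp only [parent, if_neg hl, ne_eq, Sum.inr.injEq, Prod.mk.injEq, true_and]
    intro h
    simpa [hl] using congrArg List.length h

theorem tsum_adj_inr :
    ∑' y : {y // (TInf d V₀ F).Adj (Sum.inr (t, l)) y}, ψ y
      = ψ (parent t l) + ∑ a : Fin (d - 1), ψ (Sum.inr (t, l ++ [a])) := by
  let f : Option (Fin (d - 1)) → {y // (TInf d V₀ F).Adj (Sum.inr (t, l)) y}
    | none => ⟨parent t l, adj_parent t l⟩
    | some a => ⟨Sum.inr (t, l ++ [a]), rfl, a, Or.inl rfl⟩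
  have hf : Function.Bijective f := by
    constructor
    · rintro (_ | a) (_ | b) hab <;> have hab := congrArg Subtype.val hab
      · rfl
      · exact absurd hab (parent_ne_child t l b)
      · exact absurd hab.symm (parent_ne_child t l a)
      · simp_all [f]
    · rintro ⟨u | ⟨s, m⟩, hy⟩
      · obtain ⟨rfl, rfl⟩ := hy
        exact ⟨none, Subtype.ext (by simp [f, parent])⟩
      · obtain ⟨rfl, a, rfl | rfl⟩ := hy
        · exact ⟨some a, rfl⟩
        · exact ⟨none, Subtype.ext (parent_append_singleton _ _ _)⟩
  rw [← (Equiv.ofBijective f hf).tsum_eq, tsum_fintype, Fintype.sum_option]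
  rfl

theorem tsum_level_succ (g : TInfVert d V₀ F → ℝ) (n : ℕ) :
    ∑' u : {x // TIlevel d V₀ F x = n + 1}, g u
      = ∑ t : Σ v : V₀, Fin (d - F.degree v), ∑ l : List.Vector (Fin (d - 1)) n,
          g (Sum.inr (t, l.1)) := by
  let f : (Σ v : V₀, Fin (d - F.degree v)) × List.Vector (Fin (d - 1)) n →
      {x // TIlevel d V₀ F x = n + 1} :=
    fun p => ⟨Sum.inr (p.1, p.2.1), congrArg (· + 1) p.2.2⟩
  have hf : Function.Bijective f := by
    constructor
    · rintro ⟨t, l⟩ ⟨s, m⟩ h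
      have h := congrArg Subtype.val h
      simp only [f, Sum.inr.injEq, Prod.mk.injEq] at h
      exact Prod.ext h.1 (Subtype.ext h.2)
    · rintro ⟨_ | ⟨t, l⟩, h⟩
      · simp [TIlevel] at h
      · exact ⟨(t, ⟨l, Nat.succ_injective h⟩), rfl⟩
  rw [← (Equiv.ofBijective f hf).tsum_eq, tsum_fintype, Fintype.sum_prod_type]
  rfl

theorem tsum_level_sq_le_one (hsq : Summable fun x => ψ x ^ 2) (hnorm : ∑' x, ψ x ^ 2 = 1)
    (ℓ : ℕ) : ∑' u : {x // TIlevel d V₀ F x = ℓ}, ψ u ^ 2 ≤ 1 :=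
  hnorm ▸ hsq.tsum_subtype_le _ {x | TIlevel d V₀ F x = ℓ} fun _ => sq_nonneg _

-- the mass of `ψ` on level `n + 1`, whose vertices are the `(t, l)` with `l` of length `n`
def levelMass (n : ℕ) : ℝ :=
  ∑ t : Σ v : V₀, Fin (d - F.degree v), ∑ l : List.Vector (Fin (d - 1)) n,
    ψ (Sum.inr (t, l.1)) ^ 2

def parentCorrelation (n : ℕ) : ℝ :=
  ∑ t : Σ v : V₀, Fin (d - F.degree v), ∑ l : List.Vector (Fin (d - 1)) n,
    ψ (Sum.inr (t, l.1)) * ψ (parent t l.1)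

theorem levelMass_nonneg (n : ℕ) : 0 ≤ levelMass ψ n :=
  Finset.sum_nonneg fun _ _ => Finset.sum_nonneg fun _ _ => sq_nonneg _

theorem levelMass_succ (n : ℕ) :
    levelMass ψ (n + 1) = ∑ t : Σ v : V₀, Fin (d - F.degree v),
      ∑ l : List.Vector (Fin (d - 1)) n, ∑ a : Fin (d - 1), ψ (Sum.inr (t, l.1 ++ [a])) ^ 2 :=
  Finset.sum_congr rfl fun t _ =>
    List.Vector.sum_succ_eq_sum_sum_append (fun l => ψ (Sum.inr (t, l)) ^ 2) n

theorem parentCorrelation_succ (n : ℕ) :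
    parentCorrelation ψ (n + 1) = ∑ t : Σ v : V₀, Fin (d - F.degree v),
      ∑ l : List.Vector (Fin (d - 1)) n, ∑ a : Fin (d - 1),
        ψ (Sum.inr (t, l.1 ++ [a])) * ψ (Sum.inr (t, l.1)) := by
  unfold parentCorrelation
  refine Finset.sum_congr rfl fun t _ => ?_
  rw [List.Vector.sum_succ_eq_sum_sum_append
    (fun l => ψ (Sum.inr (t, l)) * ψ (parent t l))]
  simp only [parent_append_singleton]

theorem mul_levelMass_of_eigen {lam : ℝ}
    (heig : ∀ x, ∑' y : {y // (TInf d V₀ F).Adj x y}, ψ y = lam * ψ x) (n : ℕ) :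
    lam * levelMass ψ n = parentCorrelation ψ n + parentCorrelation ψ (n + 1) := by
  have hvertex : ∀ t l, lam * ψ (Sum.inr (t, l)) ^ 2 = ψ (Sum.inr (t, l)) * ψ (parent t l)
      + ∑ a : Fin (d - 1), ψ (Sum.inr (t, l ++ [a])) * ψ (Sum.inr (t, l)) := by
    intro t l
    rw [sq, ← mul_assoc, ← heig, tsum_adj_inr, add_mul, Finset.sum_mul, mul_comm (ψ _)]
  rw [parentCorrelation_succ]
  simp only [levelMass, parentCorrelation, Finset.mul_sum, hvertex,
    Finset.sum_add_distrib]

theorem parentCorrelation_succ_sq_le (n : ℕ) :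
    parentCorrelation ψ (n + 1) ^ 2
      ≤ levelMass ψ (n + 1) * ((d - 1 : ℕ) * levelMass ψ n) := by
  have hcs := Finset.sum_mul_sq_le_sq_mul_sq Finset.univ
    (fun z : (Σ v : V₀, Fin (d - F.degree v)) × List.Vector (Fin (d - 1)) n × Fin (d - 1) =>
      ψ (Sum.inr (z.1, z.2.1.1 ++ [z.2.2])))
    (fun z => ψ (Sum.inr (z.1, z.2.1.1)))
  simp only [Fintype.sum_prod_type, Finset.sum_const, Finset.card_univ, Fintype.card_fin,
    nsmul_eq_mul] at hcs
  rw [parentCorrelation_succ, levelMass_succ, levelMass]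
  simpa only [Finset.mul_sum] using hcs

theorem tsum_level_succ_sq (n : ℕ) :
    ∑' u : {x // TIlevel d V₀ F x = n + 1}, ψ u ^ 2 = levelMass ψ n :=
  tsum_level_succ (ψ · ^ 2) n

theorem parentCorrelation_succ_le (n : ℕ) :
    parentCorrelation ψ (n + 1)
      ≤ √((d - 1 : ℕ) : ℝ) * (√(levelMass ψ n) * √(levelMass ψ (n + 1))) :=
  calc parentCorrelation ψ (n + 1)
      ≤ √(levelMass ψ (n + 1) * ((d - 1 : ℕ) * levelMass ψ n)) :=
        (le_abs_self _).trans (Real.abs_le_sqrt (parentCorrelation_succ_sq_le ψ n))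
    _ = _ := by
        rw [Real.sqrt_mul (levelMass_nonneg ψ _), Real.sqrt_mul (Nat.cast_nonneg _)]
        ring

theorem mul_sqrt_levelMass_succ_le (hd : 2 ≤ d) {κ : ℝ}
    (heig : ∀ x, ∑' y : {y // (TInf d V₀ F).Adj x y}, ψ y = κ * √((d : ℝ) - 1) * ψ x)
    (n : ℕ) : κ * √(levelMass ψ (n + 1)) ≤ √(levelMass ψ n) + √(levelMass ψ (n + 2)) := by
  have hcast : ((d - 1 : ℕ) : ℝ) = (d : ℝ) - 1 := by rw [Nat.cast_sub (by omega), Nat.cast_one]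
  have hr : 0 < √((d - 1 : ℕ) : ℝ) := Real.sqrt_pos.mpr (by exact_mod_cast (by omega : 0 < d - 1))
  obtain hb | hb := (Real.sqrt_nonneg (levelMass ψ (n + 1))).eq_or_lt
  · rw [← hb, mul_zero]
    positivity
  refine le_of_mul_le_mul_right ?_ (mul_pos hr hb)
  calc κ * √(levelMass ψ (n + 1)) * (√((d - 1 : ℕ) : ℝ) * √(levelMass ψ (n + 1)))
      = κ * √((d : ℝ) - 1) * levelMass ψ (n + 1) := by
        rw [hcast, mul_mul_mul_comm, Real.mul_self_sqrt (levelMass_nonneg ψ _)]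
    _ = parentCorrelation ψ (n + 1) + parentCorrelation ψ (n + 2) :=
        mul_levelMass_of_eigen ψ heig (n + 1)
    _ ≤ √((d - 1 : ℕ) : ℝ) * (√(levelMass ψ n) * √(levelMass ψ (n + 1)))
        + √((d - 1 : ℕ) : ℝ) * (√(levelMass ψ (n + 1)) * √(levelMass ψ (n + 2))) :=
        add_le_add (parentCorrelation_succ_le ψ n) (parentCorrelation_succ_le ψ (n + 1))
    _ = _ := by ring

end TInf

theorem statement1_general (d : ℕ) (hd : 3 ≤ d) (V₀ : Type) [Fintype V₀]
    (F : SimpleGraph V₀) [DecidableRel F.Adj]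
    (ζ lam : ℝ) (hζ : 1 < ζ) (hlam : lam = (ζ + 1 / ζ) * Real.sqrt ((d : ℝ) - 1))
    (ψ : TInfVert d V₀ F → ℝ)
    (hsq : Summable fun x => ψ x ^ 2) (hnorm : ∑' x, ψ x ^ 2 = 1)
    (heig : ∀ x, (∑' y : {y // (TInf d V₀ F).Adj x y}, ψ (y : TInfVert d V₀ F)) = lam * ψ x) :
    ∀ ℓ : ℕ, (∑' u : {x // TIlevel d V₀ F x = ℓ}, ψ (u : TInfVert d V₀ F) ^ 2)
      ≤ ζ ^ (2 - 2 * (ℓ : ℤ)) := by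
  subst hlam
  have hmass := TInf.tsum_level_sq_le_one ψ hsq hnorm
  rintro (_ | n)
  · calc _ ≤ 1 := hmass 0
      _ ≤ ζ ^ (2 : ℤ) := one_le_zpow₀ hζ.le (by norm_num)
      _ = _ := by norm_num
  have hx1 : ∀ n, √(TInf.levelMass ψ n) ≤ 1 := fun n =>
    Real.sqrt_le_one.mpr (TInf.tsum_level_succ_sq ψ n ▸ hmass (n + 1))
  have hdecay := le_inv_pow_mul_of_bddAbove_of_le_add hζ (fun n => Real.sqrt_nonneg _)
    ⟨1, Set.forall_mem_range.mpr hx1⟩ (TInf.mul_sqrt_levelMass_succ_le ψ (by omega) heig) n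
  rw [TInf.tsum_level_succ_sq]
  calc TInf.levelMass ψ n = √(TInf.levelMass ψ n) ^ 2 :=
        (Real.sq_sqrt (TInf.levelMass_nonneg ψ n)).symm
    _ ≤ (ζ⁻¹ ^ n) ^ 2 := pow_le_pow_left₀ (Real.sqrt_nonneg _)
        (hdecay.trans (mul_le_of_le_one_right (by positivity) (hx1 0))) 2
    _ = ζ ^ (2 - 2 * ((n + 1 : ℕ) : ℤ)) := by
        rw [← pow_mul, inv_pow, ← zpow_natCast, ← zpow_neg]
        congr 1
        push_cast
        ring

/-- Exponential decay of ℓ²-eigenvectors of `T^∞ F` with eigenvalue `(ζ + 1/ζ)√(d-1)`, `ζ > 1`: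
the mass at distance exactly `ℓ` from `V₀` is at most `ζ^{-2ℓ+2}`. -/
theorem statement1 (d : ℕ) (hd : 3 ≤ d) (V₀ : Type) [Fintype V₀]
    (F : SimpleGraph V₀) [DecidableRel F.Adj] (hdeg : ∀ v, F.degree v ≤ d)
    (ζ lam : ℝ) (hζ : 1 < ζ) (hlam : lam = (ζ + 1 / ζ) * Real.sqrt ((d : ℝ) - 1))
    (ψ : TInfVert d V₀ F → ℝ)
    (hsq : Summable fun x => ψ x ^ 2) (hnorm : ∑' x, ψ x ^ 2 = 1)
    (heig : ∀ x, (∑' y : {y // (TInf d V₀ F).Adj x y}, ψ (y : TInfVert d V₀ F)) = lam * ψ x) :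
    ∀ ℓ : ℕ, (∑' u : {x // TIlevel d V₀ F x = ℓ}, ψ (u : TInfVert d V₀ F) ^ 2)
      ≤ ζ ^ (2 - 2 * (ℓ : ℤ)) :=
  statement1_general d hd V₀ F ζ lam hζ hlam ψ hsq hnorm heig

end
end

section
/- Let G₀ be a finite graph on vertex set V₀ with maximum degree at most d, let G = T^∞G₀, and let H = A_G/√(d−1) act on ℓ²(V(G)). Fix z with Im[z] = η > 0 and let G(z) = (H − z)^{−1}. Then for every i ∈ V₀, Im[G_{ii}(z)] = η Σ_{j∈V₀} |G_{ij}(z)|² + (Im[m_sc(z)]/(d−1)) Σ_{j∈V₀} f(j)|G_{ij}(z)|², where f(j) = d − deg_{G₀}(j) and m_sc(z) = (−z + √(z²−4))/2 is the Stieltjes transform of the semicircle law. -/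
noncomputable section
open Matrix

/-- The matrix whose inverse is (by the Schur complement formula) the restriction to `V₀` of
the Green's function of `T^∞ G₀`: `H₀ - z - (m_sc(z)/(d-1)) Σ_j f(j) e_j e_j^*`, where
`H₀ = A_{G₀}/√(d-1)` and `f(j) = d - deg_{G₀}(j)`. -/
def wardMatrix (d : ℕ) (V₀ : Type) [Fintype V₀] [DecidableEq V₀]
    (G₀ : SimpleGraph V₀) [DecidableRel G₀.Adj] (z msc : ℂ) : Matrix V₀ V₀ ℂ :=
  ((Real.sqrt ((d : ℝ) - 1) : ℂ))⁻¹ • (G₀.adjMatrix ℂ) - z • (1 : Matrix V₀ V₀ ℂ)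
    - (msc / ((d : ℂ) - 1)) • Matrix.diagonal (fun j => ((d - G₀.degree j : ℕ) : ℂ))

/-- Ward identity for `V₀`: with `G` the Green's function of `T^∞ G₀` restricted to `V₀`
(defined through the Schur complement identity), for every `i ∈ V₀`,
`Im G_{ii} = η Σ_j |G_{ij}|² + (Im m_sc/(d-1)) Σ_j f(j)|G_{ij}|²`. -/
theorem statement9 (d : ℕ) (hd : 3 ≤ d) (V₀ : Type) [Fintype V₀] [DecidableEq V₀]
    (G₀ : SimpleGraph V₀) [DecidableRel G₀.Adj] (hdeg : ∀ v, G₀.degree v ≤ d)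
    (z : ℂ) (hz : 0 < z.im)
    (msc : ℂ) (hmsc : msc ^ 2 + z * msc + 1 = 0) (hmscim : 0 < msc.im)
    (G : Matrix V₀ V₀ ℂ)
    (hG : wardMatrix d V₀ G₀ z msc * G = 1)
    (hG' : G * wardMatrix d V₀ G₀ z msc = 1) :
    ∀ i, (G i i).im =
      z.im * (∑ j, Complex.normSq (G i j)) +
      (msc.im / ((d : ℝ) - 1)) *
        ∑ j, ((d - G₀.degree j : ℕ) : ℝ) * Complex.normSq (G i j) := by
  intro i
  set M := wardMatrix d V₀ G₀ z msc with hM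
  have hdr : ((d : ℝ) - 1) ≠ 0 := by
    have : (3:ℝ) ≤ (d:ℝ) := by exact_mod_cast hd
    linarith
  have hcast : ((d:ℂ) - 1) = (((d:ℝ) - 1 : ℝ) : ℂ) := by push_cast; ring
  set c : V₀ → ℂ := fun j =>
    (z - (starRingEnd ℂ) z) +
      ((msc - (starRingEnd ℂ) msc) / ((d:ℂ) - 1)) * ((d - G₀.degree j : ℕ) : ℂ) with hc
  have hMH : Mᴴ * Gᴴ = 1 := by
    rw [← Matrix.conjTranspose_mul, hG', Matrix.conjTranspose_one]
  have key : G - Gᴴ = G * (Mᴴ - M) * Gᴴ := by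
    rw [Matrix.mul_sub, Matrix.sub_mul, Matrix.mul_assoc, hMH, Matrix.mul_one, hG',
      Matrix.one_mul]
  have hdiff : Mᴴ - M = Matrix.diagonal c := by
    ext a b
    by_cases h : a = b
    · subst h
      simp [hM, wardMatrix, Matrix.conjTranspose_apply, Matrix.sub_apply, hc,
        Matrix.one_apply, Matrix.diagonal_apply_eq, _root_.map_mul, map_sub, map_div₀,
        Complex.conj_ofReal]
      ring
    · simp [hM, wardMatrix, Matrix.conjTranspose_apply, Matrix.sub_apply,
        Matrix.one_apply_ne h, Matrix.one_apply_ne (Ne.symm h),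
        Matrix.diagonal_apply_ne _ h, Matrix.diagonal_apply_ne _ (Ne.symm h),
        G₀.adj_comm, _root_.map_mul, Complex.conj_ofReal]
  have hentry : G i i - (starRingEnd ℂ) (G i i)
      = ∑ j, c j * ((Complex.normSq (G i j) : ℝ) : ℂ) := by
    have h1 := congrFun (congrFun key i) i
    rw [hdiff] at h1
    have h2 : (G * (Matrix.diagonal c) * Gᴴ) i i
        = ∑ j, c j * ((Complex.normSq (G i j) : ℝ) : ℂ) := by
      rw [Matrix.mul_apply]
      refine Finset.sum_congr rfl fun j _ => ?_
      rw [Matrix.mul_diagonal, Matrix.conjTranspose_apply, mul_right_comm,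
        show (star (G i j) : ℂ) = (starRingEnd ℂ) (G i j) from rfl,
        Complex.mul_conj, mul_comm]
    rw [h2] at h1
    simpa [Matrix.sub_apply, Matrix.conjTranspose_apply] using h1
  have him := congrArg Complex.im hentry
  rw [Complex.sub_im, Complex.conj_im, Complex.im_sum] at him
  have hterm : ∀ j : V₀, (c j * ((Complex.normSq (G i j) : ℝ) : ℂ)).im
      = (2 * z.im + 2 * msc.im / ((d:ℝ) - 1) * ((d - G₀.degree j : ℕ) : ℝ))
        * Complex.normSq (G i j) := by
    intro j
    have hmi : (c j * ((Complex.normSq (G i j) : ℝ) : ℂ)).im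
        = (c j).im * Complex.normSq (G i j) := by
      simp [Complex.mul_im]
    rw [hmi]
    have hw : ((msc - (starRingEnd ℂ) msc) / ((d:ℂ) - 1)).im
        = 2 * msc.im / ((d:ℝ) - 1) := by
      rw [hcast, Complex.div_ofReal_im, Complex.sub_im, Complex.conj_im]
      ring
    have hcim : (c j).im
        = 2 * z.im + 2 * msc.im / ((d:ℝ) - 1) * ((d - G₀.degree j : ℕ) : ℝ) := by
      simp only [hc, Complex.add_im, Complex.sub_im, Complex.conj_im, Complex.mul_im,
        Complex.natCast_im, Complex.natCast_re, mul_zero, hw]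
      push_cast
      ring
    rw [hcim]
  have hsum : ∑ j, (c j * ((Complex.normSq (G i j) : ℝ) : ℂ)).im
      = 2 * z.im * (∑ j, Complex.normSq (G i j))
        + 2 * (msc.im / ((d:ℝ) - 1))
          * ∑ j, ((d - G₀.degree j : ℕ) : ℝ) * Complex.normSq (G i j) := by
    rw [Finset.mul_sum, Finset.mul_sum, ← Finset.sum_add_distrib]
    refine Finset.sum_congr rfl fun j _ => ?_
    rw [hterm j]; ring
  rw [hsum] at him
  linarith


end
end
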